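/- Let I be a nontrivial real interval and f : Iⁿ → I continuous, symmetric, cancellative, and associative, and suppose c ∈ I satisfies c < f(c,…,c). Then for every x ∈ I one has x < f(x, c, …, c) (with n-1 copies of c). -/

import Mathlib

/-!
If `f (x, c, …, c) ≤ x` for some `x ∈ I`, the intermediate value theorem yields a fixed point
`p` of `t ↦ f (t, c, …, c)` between `c` and `x`. Associativity applied to the tuple
`(c, …, c, p, c, …, c)` gives `f (f (c, …, c), p, c, …, c) = f (c, f (c, …, c, p), c, …, c)`;
by symmetry the inner value is `p`, so cancelling the first argument forces `f (c, …, c) = c`.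
-/

/-- `f : Iⁿ → I` is associative in the `n`-ary sense: for each `i` with `i+1 < n`,
substituting `f` into positions `i` or `i+1` of a `(2n-1)`-tuple over `I` gives
the same result. -/
def NAssocOn (n : ℕ) (I : Set ℝ) (f : (Fin n → ℝ) → ℝ) : Prop :=
  ∀ x : ℕ → ℝ, (∀ j, j < 2 * n - 1 → x j ∈ I) → ∀ i : ℕ, i + 1 < n →
    f (fun j : Fin n => if (j : ℕ) < i then x j
        else if (j : ℕ) = i then f (fun l : Fin n => x (i + (l : ℕ)))
        else x ((j : ℕ) + n - 1)) =
    f (fun j : Fin n => if (j : ℕ) < i + 1 then x j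
        else if (j : ℕ) = i + 1 then f (fun l : Fin n => x (i + 1 + (l : ℕ)))
        else x ((j : ℕ) + n - 1))

/-- `f` is symmetric on `Iⁿ`: invariant under all permutations of its arguments. -/
def SymmOn (n : ℕ) (I : Set ℝ) (f : (Fin n → ℝ) → ℝ) : Prop :=
  ∀ x : Fin n → ℝ, (∀ i, x i ∈ I) → ∀ σ : Equiv.Perm (Fin n), f (x ∘ σ) = f x

/-- `f` is cancellative on `Iⁿ`: one-to-one in each variable. -/
def CancOn (n : ℕ) (I : Set ℝ) (f : (Fin n → ℝ) → ℝ) : Prop :=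
  ∀ k : Fin n, ∀ x x' : Fin n → ℝ, (∀ i, x i ∈ I) → (∀ i, x' i ∈ I) →
    (∀ i, i ≠ k → x i = x' i) → f x = f x' → x k = x' k

open Function Set

theorem forall_update_mem {ι α : Type*} [DecidableEq ι] {I : Set α} {x : ι → α}
    (hx : ∀ i, x i ∈ I) (k : ι) {b : α} (hb : b ∈ I) : ∀ i, update x k b i ∈ I :=
  (forall_update_iff x fun _ y => y ∈ I).2 ⟨hb, fun i _ => hx i⟩

variable {n : ℕ} {I : Set ℝ} {f : (Fin n → ℝ) → ℝ}

theorem SymmOn.apply_update_const (hsym : SymmOn n I f) {a b : ℝ} (ha : a ∈ I) (hb : b ∈ I)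
    (i j : Fin n) : f (update (fun _ => a) i b) = f (update (fun _ => a) j b) := by
  have key := hsym _ (forall_update_mem (fun _ => ha) i hb) (Equiv.swap i j)
  rw [update_comp_equiv, Equiv.symm_swap, Equiv.swap_apply_left] at key
  exact key.symm

theorem CancOn.eq_of_apply_update_eq (hcanc : CancOn n I f) {x : Fin n → ℝ} (hx : ∀ i, x i ∈ I)
    (k : Fin n) {a : ℝ} (ha : a ∈ I) (h : f (update x k a) = f x) : a = x k := by
  simpa using hcanc k _ _ (forall_update_mem hx k ha) hx (fun i hi => by simp [hi]) h

theorem NAssocOn.apply_update_const {m : ℕ} {f : (Fin (m + 2) → ℝ) → ℝ}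
    (hassoc : NAssocOn (m + 2) I f) {a b : ℝ} (ha : a ∈ I) (hb : b ∈ I) :
    f (update (update (fun _ => a) 1 b) 0 (f fun _ => a)) =
      f (update (fun _ => a) 1 (f (update (fun _ => a) (Fin.last _) b))) := by
  set X : ℕ → ℝ := update (fun _ => a) (m + 2) b
  have key := hassoc X (fun j _ => forall_update_mem (fun _ => ha) _ hb j) 0 (by omega)
  have block_zero : (fun l : Fin (m + 2) => X (0 + l)) = fun _ => a := by
    funext l
    simp only [X, update_apply]
    rw [if_neg (by omega)]
  have block_one : (fun l : Fin (m + 2) => X (0 + 1 + l)) = update (fun _ => a) (Fin.last _) b := by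
    funext l
    simp only [X, update_apply, Fin.ext_iff, Fin.val_last]
    grind
  rw [block_zero, block_one] at key
  convert key using 2 <;> funext j
  all_goals
    rcases j with ⟨_ | _ | j, hj⟩ <;> simp [X, update_apply, Fin.ext_iff]
    omega

theorem apply_update_zero_ne_self {m : ℕ} {f : (Fin (m + 2) → ℝ) → ℝ}
    (hmap : ∀ x : Fin (m + 2) → ℝ, (∀ i, x i ∈ I) → f x ∈ I) (hsym : SymmOn (m + 2) I f)
    (hcanc : CancOn (m + 2) I f) (hassoc : NAssocOn (m + 2) I f) {c : ℝ} (hc : c ∈ I)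
    (hcf : f (fun _ => c) ≠ c) {p : ℝ} (hp : p ∈ I) : f (update (fun _ => c) 0 p) ≠ p := by
  intro hfix
  have hlast : f (update (fun _ => c) (Fin.last _) p) = p :=
    (hsym.apply_update_const hc hp _ 0).trans hfix
  have key := hassoc.apply_update_const hc hp
  rw [hlast] at key
  exact hcf (hcanc.eq_of_apply_update_eq (forall_update_mem (fun _ => hc) 1 hp) 0
    (hmap _ fun _ => hc) key)

theorem stmt_5_general (n : ℕ) (hn : 2 ≤ n) (I : Set ℝ) (hI : I.OrdConnected)
    (f : (Fin n → ℝ) → ℝ)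
    (hmap : ∀ x : Fin n → ℝ, (∀ i, x i ∈ I) → f x ∈ I)
    (hcont : ContinuousOn f {x | ∀ i, x i ∈ I})
    (hsym : SymmOn n I f) (hcanc : CancOn n I f) (hassoc : NAssocOn n I f)
    (c : ℝ) (hc : c ∈ I) (hcf : c < f (fun _ => c)) :
    ∀ x ∈ I, x < f (fun i => if (i : ℕ) = 0 then x else c) := by
  obtain ⟨m, rfl⟩ : ∃ m, n = m + 2 := ⟨n - 2, by omega⟩
  intro x hx
  have tuple : (fun i : Fin (m + 2) => if (i : ℕ) = 0 then x else c) = update (fun _ => c) 0 x := by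
    funext i
    simp only [update_apply, Fin.ext_iff, Fin.val_zero]
  rw [tuple]
  by_contra! hle
  have hsub := hI.uIcc_subset hc hx
  have hg : ContinuousOn (fun t => f (update (fun _ => c) 0 t)) (uIcc c x) :=
    hcont.comp (by fun_prop) fun t ht => forall_update_mem (fun _ => hc) 0 (hsub ht)
  obtain ⟨p, hp, hfix⟩ := exists_mem_uIcc_isFixedPt hg (by simpa using hcf.le) hle
  exact apply_update_zero_ne_self hmap hsym hcanc hassoc hc hcf.ne' (hsub hp) hfix

/-- Claim 3 (first part): if `c < f(c,…,c)` then `x < f(x, c, …, c)` for every `x ∈ I`. -/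
theorem stmt_5 (n : ℕ) (hn : 2 ≤ n) (I : Set ℝ) (hI : I.OrdConnected)
    (hne : ∃ a ∈ I, ∃ b ∈ I, a ≠ b)
    (f : (Fin n → ℝ) → ℝ)
    (hmap : ∀ x : Fin n → ℝ, (∀ i, x i ∈ I) → f x ∈ I)
    (hcont : ContinuousOn f {x | ∀ i, x i ∈ I})
    (hsym : SymmOn n I f) (hcanc : CancOn n I f) (hassoc : NAssocOn n I f)
    (c : ℝ) (hc : c ∈ I) (hcf : c < f (fun _ => c)) :
    ∀ x ∈ I, x < f (fun i => if (i : ℕ) = 0 then x else c) :=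
  stmt_5_general n hn I hI f hmap hcont hsym hcanc hassoc c hc hcf
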